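/- Let N ≥ 1, let t_0 < t_1 < ⋯ < t_N be real numbers, let f : ℝ → ℝ be continuously differentiable on [t_0, t_N], and for each 0 ≤ n ≤ N−1 set T_n = t_{n+1} − t_n, s_n = (t_n + t_{n+1})/2, E_n = ∫_{t_n}^{t_{n+1}} f(t)² dt and D_n = ∫_{t_n}^{t_{n+1}} f′(t)² dt. Suppose α > 0 and that the local energy condition T_n² · D_n ≤ α π² E_n holds for every n. Then Σ_{n=0}^{N−1} ∫_{t_n}^{t_{n+1}} (f(t) − f(s_n))² dt ≤ α · ∫_{t_0}^{t_N} f(t)² dt. -/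

import Mathlib

open MeasureTheory intervalIntegral Real Set Filter

/-!
On `[p, q]` the function `g = f - f ((p + q) / 2)` vanishes at the midpoint, so on each half, an
interval of length `L = (q - p) / 2`, it obeys the sharp Wirtinger inequality for functions
vanishing at one endpoint, `(π / 2L)² ∫ g² ≤ ∫ g'²`. Hence `∫ (f - f(s))² ≤ (T / π)² ∫ f'²`,
which the local energy condition bounds by `α ∫ f²`; sum over the intervals.

The Wirtinger inequality comes from the Riccati trick: if `w' = -(c² + w²)`, then
`g'² - c² g² - (w g²)' = (g' - w g)² ≥ 0`. The solution `w = -c tan (c (x - x₀))`, with `x₀`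
the endpoint where `g` need not vanish, kills the boundary term `[w g²]` and is regular while
`c L < π / 2`; the sharp constant `c = π / 2L` is reached as a limit.
-/

lemma sq_mul_integral_sq_add_sub_le_integral_deriv_sq {a b c : ℝ} {g g' w : ℝ → ℝ}
    (hab : a ≤ b) (hw : ∀ x ∈ Icc a b, HasDerivAt w (-(c ^ 2 + w x ^ 2)) x)
    (hg : ∀ x ∈ Icc a b, HasDerivAt g (g' x) x) (hg' : ContinuousOn g' (Icc a b)) :
    c ^ 2 * (∫ x in a..b, g x ^ 2) + (w b * g b ^ 2 - w a * g a ^ 2) ≤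
      ∫ x in a..b, g' x ^ 2 := by
  have hΦ : ∀ x ∈ Icc a b, HasDerivAt (fun y => w y * g y ^ 2)
      (-(c ^ 2 + w x ^ 2) * g x ^ 2 + w x * (2 * g x * g' x)) x := by
    intro x hx
    refine ((hw x hx).mul ((hg x hx).pow 2)).congr_deriv ?_
    simp only [Pi.pow_apply, Nat.cast_ofNat]
    ring
  have hgc : ContinuousOn g (Icc a b) := HasDerivAt.continuousOn hg
  have hg2 : IntervalIntegrable (fun x => g x ^ 2) volume a b :=
    (hgc.pow 2).intervalIntegrable_of_Icc hab
  have hg'2 : IntervalIntegrable (fun x => g' x ^ 2) volume a b :=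
    (hg'.pow 2).intervalIntegrable_of_Icc hab
  have hbd : w b * g b ^ 2 - w a * g a ^ 2 ≤ ∫ x in a..b, (g' x ^ 2 - c ^ 2 * g x ^ 2) :=
    sub_le_integral_of_hasDeriv_right_of_le hab
      (fun x hx => (hΦ x hx).continuousAt.continuousWithinAt)
      (fun x hx => (hΦ x (Ioo_subset_Icc_self hx)).hasDerivWithinAt)
      ((hg'.pow 2).sub (continuousOn_const.mul (hgc.pow 2))).integrableOn_Icc
      (fun x _ => by nlinarith [sq_nonneg (g' x - w x * g x)])
  rw [integral_sub hg'2 (hg2.const_mul _), intervalIntegral.integral_const_mul] at hbd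
  exact le_sub_iff_add_le'.1 hbd

lemma hasDerivAt_neg_mul_tan_mul_sub {c x₀ x : ℝ} (h : cos (c * (x - x₀)) ≠ 0) :
    HasDerivAt (fun y => -c * tan (c * (y - x₀)))
      (-(c ^ 2 + (-c * tan (c * (x - x₀))) ^ 2)) x := by
  have hlin : HasDerivAt (fun y => c * (y - x₀)) c x := by
    simpa using ((hasDerivAt_id x).sub_const x₀).const_mul c
  refine (((hasDerivAt_tan h).comp x hlin).const_mul (-c)).congr_deriv ?_
  rw [tan_eq_sin_div_cos]
  field_simp
  nlinarith [sin_sq_add_cos_sq (c * (x - x₀))]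

lemma sq_mul_integral_sq_le_integral_deriv_sq {a b c : ℝ} {g g' : ℝ → ℝ} (hab : a ≤ b)
    (hc : 0 ≤ c) (hcab : c * (b - a) < π / 2)
    (hg : ∀ x ∈ Icc a b, HasDerivAt g (g' x) x) (hg' : ContinuousOn g' (Icc a b))
    (hzero : g a = 0 ∨ g b = 0) :
    c ^ 2 * ∫ x in a..b, g x ^ 2 ≤ ∫ x in a..b, g' x ^ 2 := by
  obtain ⟨x₀, hx₀, hbd⟩ : ∃ x₀ ∈ Icc a b,
      -c * tan (c * (b - x₀)) * g b ^ 2 - -c * tan (c * (a - x₀)) * g a ^ 2 = 0 := by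
    rcases hzero with h | h
    · exact ⟨b, right_mem_Icc.2 hab, by simp [h]⟩
    · exact ⟨a, left_mem_Icc.2 hab, by simp [h]⟩
  have hcos : ∀ x ∈ Icc a b, cos (c * (x - x₀)) ≠ 0 := by
    intro x hx
    refine (cos_pos_of_mem_Ioo ⟨?_, ?_⟩).ne'
    · nlinarith [hx.1, hx.2, hx₀.1, hx₀.2]
    · nlinarith [hx.1, hx.2, hx₀.1, hx₀.2]
  have := sq_mul_integral_sq_add_sub_le_integral_deriv_sq hab
    (fun x hx => hasDerivAt_neg_mul_tan_mul_sub (hcos x hx)) hg hg'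
  simpa only [hbd, add_zero] using this

lemma sq_mul_le_of_forall_lt {C I J : ℝ} (hC : 0 < C) (h : ∀ c ∈ Ioo 0 C, c ^ 2 * I ≤ J) :
    C ^ 2 * I ≤ J :=
  le_of_tendsto ((by fun_prop : Continuous fun c : ℝ => c ^ 2 * I).tendsto C
    |>.mono_left nhdsWithin_le_nhds) (eventually_of_mem (Ioo_mem_nhdsLT hC) h)

lemma integral_sub_midpoint_sq_le {p q : ℝ} {f f' : ℝ → ℝ} (hpq : p < q)
    (hf : ∀ x ∈ Icc p q, HasDerivAt f (f' x) x) (hf' : ContinuousOn f' (Icc p q)) :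
    ∫ x in p..q, (f x - f ((p + q) / 2)) ^ 2 ≤ ((q - p) / π) ^ 2 * ∫ x in p..q, f' x ^ 2 := by
  set s := (p + q) / 2 with hs
  have hps : p ≤ s := by linarith
  have hsq : s ≤ q := by linarith
  have hL : Icc p s ⊆ Icc p q := Icc_subset_Icc_right hsq
  have hR : Icc s q ⊆ Icc p q := Icc_subset_Icc_left hps
  have hg : ∀ x ∈ Icc p q, HasDerivAt (fun y => f y - f s) (f' x) x :=
    fun x hx => (hf x hx).sub_const _
  have hsplit : ∀ φ : ℝ → ℝ, ContinuousOn φ (Icc p q) →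
      ∫ x in p..q, φ x = (∫ x in p..s, φ x) + ∫ x in s..q, φ x := fun φ hφ =>
    (integral_add_adjacent_intervals ((hφ.mono hL).intervalIntegrable_of_Icc hps)
      ((hφ.mono hR).intervalIntegrable_of_Icc hsq)).symm
  have hbound :
      (π / (q - p)) ^ 2 * ∫ x in p..q, (f x - f s) ^ 2 ≤ ∫ x in p..q, f' x ^ 2 := by
    refine sq_mul_le_of_forall_lt (by have := sub_pos.2 hpq; positivity) fun c hc => ?_
    have hcq : c * (q - p) < π := (lt_div_iff₀ (sub_pos.2 hpq)).1 hc.2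
    have hhalf : c * (s - p) < π / 2 ∧ c * (q - s) < π / 2 := by
      constructor <;> linarith [show c * (s - p) = c * (q - p) / 2 by rw [hs]; ring,
        show c * (q - s) = c * (q - p) / 2 by rw [hs]; ring]
    rw [hsplit (fun x => f' x ^ 2) (hf'.pow 2),
      hsplit (fun x => (f x - f s) ^ 2) ((HasDerivAt.continuousOn hg).pow 2), mul_add]
    exact add_le_add
      (sq_mul_integral_sq_le_integral_deriv_sq hps hc.1.le hhalf.1
        (fun x hx => hg x (hL hx)) (hf'.mono hL) (Or.inr (sub_self _)))
      (sq_mul_integral_sq_le_integral_deriv_sq hsq hc.1.le hhalf.2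
        (fun x hx => hg x (hR hx)) (hf'.mono hR) (Or.inl (sub_self _)))
  calc ∫ x in p..q, (f x - f s) ^ 2
      = ((q - p) / π) ^ 2 * ((π / (q - p)) ^ 2 * ∫ x in p..q, (f x - f s) ^ 2) := by
        field_simp [(sub_pos.2 hpq).ne']
    _ ≤ ((q - p) / π) ^ 2 * ∫ x in p..q, f' x ^ 2 := by gcongr

lemma integral_sub_midpoint_sq_le_of_local_energy {p q α : ℝ} {f f' : ℝ → ℝ} (hpq : p < q)
    (hf : ∀ x ∈ Icc p q, HasDerivAt f (f' x) x) (hf' : ContinuousOn f' (Icc p q))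
    (hlocal : (q - p) ^ 2 * (∫ x in p..q, f' x ^ 2) ≤ α * π ^ 2 * ∫ x in p..q, f x ^ 2) :
    ∫ x in p..q, (f x - f ((p + q) / 2)) ^ 2 ≤ α * ∫ x in p..q, f x ^ 2 := by
  calc _ ≤ ((q - p) / π) ^ 2 * ∫ x in p..q, f' x ^ 2 := integral_sub_midpoint_sq_le hpq hf hf'
    _ ≤ α * π ^ 2 * (∫ x in p..q, f x ^ 2) / π ^ 2 := by
      rw [div_pow, div_mul_eq_mul_div]
      exact div_le_div_of_nonneg_right hlocal (by positivity)
    _ = α * ∫ x in p..q, f x ^ 2 := by field_simp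

theorem local_energy_convergence_condition_general
    (N : ℕ) (t : ℕ → ℝ)
    (ht : ∀ n < N, t n < t (n + 1))
    (f f' : ℝ → ℝ)
    (hderiv : ∀ x ∈ Set.Icc (t 0) (t N), HasDerivAt f (f' x) x)
    (hcont : ContinuousOn f' (Set.Icc (t 0) (t N)))
    (α : ℝ)
    (hlocal : ∀ n < N,
      (t (n + 1) - t n) ^ 2 * (∫ x in (t n)..(t (n + 1)), (f' x) ^ 2)
        ≤ α * π ^ 2 * ∫ x in (t n)..(t (n + 1)), (f x) ^ 2) :
    ∑ n ∈ Finset.range N,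
        ∫ x in (t n)..(t (n + 1)), (f x - f ((t n + t (n + 1)) / 2)) ^ 2
      ≤ α * ∫ x in (t 0)..(t N), (f x) ^ 2 := by
  have hmono : MonotoneOn t (Iic N) := (strictMonoOn_Iic_of_lt_succ ht).monotoneOn
  have hsub : ∀ n < N, Icc (t n) (t (n + 1)) ⊆ Icc (t 0) (t N) := fun n hn =>
    Icc_subset_Icc (hmono (by simp) (by simp; omega) (Nat.zero_le n))
      (hmono (by simp; omega) (by simp) hn)
  have hfc : ContinuousOn f (Icc (t 0) (t N)) := HasDerivAt.continuousOn hderiv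
  calc _ ≤ ∑ n ∈ Finset.range N, α * ∫ x in (t n)..(t (n + 1)), f x ^ 2 :=
        Finset.sum_le_sum fun n hn => have hn := Finset.mem_range.1 hn
          integral_sub_midpoint_sq_le_of_local_energy (ht n hn)
            (fun x hx => hderiv x (hsub n hn hx)) (hcont.mono (hsub n hn)) (hlocal n hn)
    _ = α * ∫ x in (t 0)..(t N), f x ^ 2 := by
        rw [← Finset.mul_sum, sum_integral_adjacent_intervals (f := fun x => f x ^ 2) fun k hk =>
          ((hfc.mono (hsub k hk)).pow 2).intervalIntegrable_of_Icc (ht k hk).le]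

/-- Local, energy-based sufficient condition: if on each sampling interval
`T_n² D_n ≤ α π² E_n`, then the total midpoint approximation error is bounded
by `α ∫ f²`. -/
theorem local_energy_convergence_condition
    (N : ℕ) (hN : 1 ≤ N) (t : ℕ → ℝ)
    (ht : ∀ n < N, t n < t (n + 1))
    (f f' : ℝ → ℝ)
    (hderiv : ∀ x ∈ Set.Icc (t 0) (t N), HasDerivAt f (f' x) x)
    (hcont : ContinuousOn f' (Set.Icc (t 0) (t N)))
    (α : ℝ) (hα : 0 < α)
    (hlocal : ∀ n < N,
      (t (n + 1) - t n) ^ 2 * (∫ x in (t n)..(t (n + 1)), (f' x) ^ 2)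
        ≤ α * π ^ 2 * ∫ x in (t n)..(t (n + 1)), (f x) ^ 2) :
    ∑ n ∈ Finset.range N,
        ∫ x in (t n)..(t (n + 1)), (f x - f ((t n + t (n + 1)) / 2)) ^ 2
      ≤ α * ∫ x in (t 0)..(t N), (f x) ^ 2 :=
  local_energy_convergence_condition_general N t ht f f' hderiv hcont α hlocal
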